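/- Suppose κ is an uncountable regular cardinal, γ < κ, ⟨S_α : α < γ⟩ is a family of pairwise disjoint subsets of κ whose union is {ξ < κ : cf(ξ) = ω}, η₀ < κ has uncountable cofinality, and β < γ is such that S_β ∩ η₀ is stationary in η₀. If every ordinal ε < η₀ of cofinality ω lying in S_β belongs to the range of a function j with j(S̄_α) = S_α in the sense that ε = j(ε̄) with ε̄ ∈ S̄_ᾱ implies ε ∈ S_{j(ᾱ)}, then β is in the range of j on γ̄. -/

import Mathlib

open Cardinal

/-- `κ` is an uncountable regular cardinal (viewed as an ordinal). -/
def IsUncRegOrd (κ : Ordinal) : Prop := κ.cof.ord = κ ∧ Cardinal.aleph0 < κ.cof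

/-- `C` is a closed unbounded subset of `κ`. -/
def IsClubBelow (C : Set Ordinal) (κ : Ordinal) : Prop :=
  (∀ o ∈ C, o < κ) ∧ (∀ α < κ, ∃ β ∈ C, α ≤ β) ∧
    ∀ ξ < κ, Order.IsSuccLimit ξ → (∀ α < ξ, ∃ β ∈ C, β < ξ ∧ α ≤ β) → ξ ∈ C

/-- `S` is a stationary subset of `κ`. -/
def IsStatBelow (S : Set Ordinal) (κ : Ordinal) : Prop :=
  ∀ C, IsClubBelow C κ → (S ∩ C).Nonempty

/-! A point `ε` of the stationary set `S_β ∩ η₀` has cofinality `ω`, so `ε = j ε̄` with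
`ε̄ ∈ S̄_ᾱ`; then `ε ∈ S_{j ᾱ} ∩ S_β`, and disjointness of the partition forces `j ᾱ = β`. -/

theorem isClubBelow_Iio (η : Ordinal) : IsClubBelow (Set.Iio η) η :=
  ⟨fun _ ho => ho, fun α hα => ⟨α, hα, le_rfl⟩, fun _ hξ _ _ => hξ⟩

theorem IsStatBelow.exists_mem_lt {S : Set Ordinal} {η : Ordinal} (h : IsStatBelow S η) :
    ∃ ε ∈ S, ε < η := by
  obtain ⟨ε, hεS, hεη⟩ := h _ (isClubBelow_Iio η)
  exact ⟨ε, hεS, hεη⟩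

theorem exists_eq_of_mem_image_of_pairwiseDisjoint {γ γb β ε : Ordinal}
    {S Sb : Ordinal → Set Ordinal} {j : Ordinal → Ordinal}
    (hdisj : (Set.Iio γ).PairwiseDisjoint S) (hβ : β < γ) (hεS : ε ∈ S β)
    (hjim : ∀ αb, αb < γb → j αb < γ)
    (hcoh : ∀ εb αb, αb < γb → εb ∈ Sb αb → j εb ∈ S (j αb))
    (himg : ∃ εb, (∃ αb < γb, εb ∈ Sb αb) ∧ j εb = ε) :
    ∃ αb < γb, j αb = β := by
  obtain ⟨εb, ⟨αb, hαb, hεb⟩, rfl⟩ := himg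
  exact ⟨αb, hαb, hdisj.elim_set (hjim αb hαb) hβ _ (hcoh εb αb hαb hεb) hεS⟩

theorem forward_inclusion_general (κ γ η₀ β : Ordinal) (S : Ordinal → Set Ordinal)
    (j : Ordinal → Ordinal) (γb : Ordinal) (Sb : Ordinal → Set Ordinal)
    (hdisj : ∀ α₁ α₂, α₁ < γ → α₂ < γ → α₁ ≠ α₂ → Disjoint (S α₁) (S α₂))
    (hunion : ∀ ξ, (∃ α < γ, ξ ∈ S α) ↔ (ξ < κ ∧ ξ.cof = Cardinal.aleph0))
    (hβ : β < γ) (hstat : IsStatBelow (S β ∩ Set.Iio η₀) η₀)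
    (hjim : ∀ αb, αb < γb → j αb < γ)
    (hran : ∀ ε, ε < η₀ → ε.cof = Cardinal.aleph0 → ε ∈ S β →
      ∃ εb, (∃ αb < γb, εb ∈ Sb αb) ∧ j εb = ε)
    (hcoh : ∀ εb αb, αb < γb → εb ∈ Sb αb → j εb ∈ S (j αb)) :
    ∃ αb < γb, j αb = β := by
  obtain ⟨ε, ⟨hεS, hεη⟩, -⟩ := hstat.exists_mem_lt
  have hεcof : ε.cof = ℵ₀ := ((hunion ε).mp ⟨β, hβ, hεS⟩).2
  exact exists_eq_of_mem_image_of_pairwiseDisjoint (fun α₁ h₁ α₂ h₂ hne => hdisj α₁ α₂ h₁ h₂ hne)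
    hβ hεS hjim hcoh (hran ε hεη hεcof hεS)

/-- The forward inclusion `τ_{η₀} ⊆ ran j` from the stationary
partition lemma: if `⟨S_α : α < γ⟩` is a pairwise disjoint family whose union is
`{ξ < κ : cf ξ = ω}`, `η₀ < κ` has uncountable cofinality, `S_β ∩ η₀` is stationary
in `η₀`, every cofinality-`ω` member of `S_β` below `η₀` is of the form `j ε̄` with
`ε̄ ∈ S̄_ᾱ` for some `ᾱ < γ̄`, and `j` moves members of `S̄_ᾱ` into `S_{j ᾱ}`,
then `β` is in the range of `j` on `γ̄`. -/
theorem forward_inclusion (κ γ η₀ β : Ordinal) (S : Ordinal → Set Ordinal)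
    (j : Ordinal → Ordinal) (γb : Ordinal) (Sb : Ordinal → Set Ordinal)
    (hκ : IsUncRegOrd κ) (hγ : γ < κ)
    (hdisj : ∀ α₁ α₂, α₁ < γ → α₂ < γ → α₁ ≠ α₂ → Disjoint (S α₁) (S α₂))
    (hunion : ∀ ξ, (∃ α < γ, ξ ∈ S α) ↔ (ξ < κ ∧ ξ.cof = Cardinal.aleph0))
    (hη : η₀ < κ) (hηcof : Cardinal.aleph0 < η₀.cof)
    (hβ : β < γ) (hstat : IsStatBelow (S β ∩ Set.Iio η₀) η₀)
    (hjim : ∀ αb, αb < γb → j αb < γ)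
    (hran : ∀ ε, ε < η₀ → ε.cof = Cardinal.aleph0 → ε ∈ S β →
      ∃ εb, (∃ αb < γb, εb ∈ Sb αb) ∧ j εb = ε)
    (hcoh : ∀ εb αb, αb < γb → εb ∈ Sb αb → j εb ∈ S (j αb)) :
    ∃ αb < γb, j αb = β :=
  forward_inclusion_general κ γ η₀ β S j γb Sb hdisj hunion hβ hstat hjim hran hcoh
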